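/- If a ≠ 0, then the Lie algebra 𝔤ₐ is perfect, i.e. its derived ideal [𝔤ₐ,𝔤ₐ] (the span of all brackets) equals 𝔤ₐ; in particular 𝔤ₐ is not solvable. -/
import Mathlib


noncomputable section

/-- The standard basis vectors `e₁, …, e₇` of `ℝ⁷` (0-indexed). -/
def e (k : Fin 7) : Fin 7 → ℝ := Pi.single k 1

/-- The table of brackets `[eᵢ, eⱼ]` of the Lie algebra `𝔤ₐ`
(extended by antisymmetry, all other brackets of basis vectors zero). -/
def braTable (a : ℝ) : Fin 7 → Fin 7 → Fin 7 → ℝ :=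
  ![![0, (a/2) • e 6, (-(a/2)) • e 4, (-a) • e 5, (a/2) • e 2, a • e 3, (-(a/2)) • e 1],
    ![(-(a/2)) • e 6, 0, 0, (a/2) • e 4, 0, (-(a/2)) • e 2, 0],
    ![(a/2) • e 4, 0, 0, (a/2) • e 6, 0, (a/2) • e 1, 0],
    ![a • e 5, (-(a/2)) • e 4, (-(a/2)) • e 6, 0, (a/2) • e 1, (-a) • e 0, (a/2) • e 2],
    ![(-(a/2)) • e 2, 0, 0, (-(a/2)) • e 1, 0, (a/2) • e 6, 0],
    ![(-a) • e 3, (a/2) • e 2, (-(a/2)) • e 1, a • e 0, (-(a/2)) • e 6, 0, (a/2) • e 4],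
    ![(a/2) • e 1, 0, 0, (-(a/2)) • e 2, 0, (-(a/2)) • e 4, 0]]

/-- The bilinear bracket of the Lie algebra `𝔤ₐ` on `ℝ⁷`, determined by `braTable`
on the standard basis. -/
def bra (a : ℝ) (x y : Fin 7 → ℝ) : Fin 7 → ℝ :=
  ∑ i : Fin 7, ∑ j : Fin 7, (x i * y j) • braTable a i j

/-- The derived series of `𝔤ₐ`. -/
def gaDerivedSeries (a : ℝ) : ℕ → Submodule ℝ (Fin 7 → ℝ)
  | 0 => ⊤
  | n + 1 => Submodule.span ℝ
      {z : Fin 7 → ℝ | ∃ x ∈ gaDerivedSeries a n, ∃ y ∈ gaDerivedSeries a n, z = bra a x y}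

lemma bra_e (a : ℝ) (i j : Fin 7) : bra a (e i) (e j) = braTable a i j := by
  unfold bra e
  rw [Finset.sum_eq_single i]
  · rw [Finset.sum_eq_single j]
    · simp
    · intro b _ hb; simp [Pi.single_apply, hb]
    · simp
  · intro b _ hb
    apply Finset.sum_eq_zero
    intro j' _
    simp [Pi.single_apply, hb]
  · simp

/-- if `a ≠ 0` then `𝔤ₐ` is perfect, i.e. the span of all brackets is
the whole Lie algebra; in particular every term of the derived series equals `𝔤ₐ`,
so `𝔤ₐ` is not solvable. -/
theorem ga_perfect_not_solvable (a : ℝ) (ha : a ≠ 0) :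
    Submodule.span ℝ {z : Fin 7 → ℝ | ∃ x y : Fin 7 → ℝ, z = bra a x y} = ⊤ ∧
    (∀ n : ℕ, gaDerivedSeries a n = ⊤) ∧ ¬ ∃ n : ℕ, gaDerivedSeries a n = ⊥ := by
  set S : Set (Fin 7 → ℝ) := {z : Fin 7 → ℝ | ∃ x y : Fin 7 → ℝ, z = bra a x y} with hSdef
  have hS : ∀ i j : Fin 7, braTable a i j ∈ Submodule.span ℝ S :=
    fun i j => Submodule.subset_span ⟨e i, e j, (bra_e a i j).symm⟩
  have ha2 : a / 2 ≠ 0 := by positivity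
  have key : ∀ (k i j : Fin 7) (c : ℝ), braTable a i j = c • e k → c ≠ 0 →
      e k ∈ Submodule.span ℝ S := by
    intro k i j c h hc
    have := (Submodule.span ℝ S).smul_mem c⁻¹ (hS i j)
    rwa [h, smul_smul, inv_mul_cancel₀ hc, one_smul] at this
  have he : ∀ k : Fin 7, e k ∈ Submodule.span ℝ S := by
    intro k
    fin_cases k
    · exact key 0 3 5 (-a) rfl (neg_ne_zero.mpr ha)
    · exact key 1 0 6 (-(a/2)) rfl (neg_ne_zero.mpr ha2)
    · exact key 2 0 4 (a/2) rfl ha2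
    · exact key 3 0 5 a rfl ha
    · exact key 4 0 2 (-(a/2)) rfl (neg_ne_zero.mpr ha2)
    · exact key 5 0 3 (-a) rfl (neg_ne_zero.mpr ha)
    · exact key 6 0 1 (a/2) rfl ha2
  have hspan : Submodule.span ℝ S = ⊤ := by
    rw [eq_top_iff, ← (Pi.basisFun ℝ (Fin 7)).span_eq]
    apply Submodule.span_le.mpr
    rintro _ ⟨k, rfl⟩
    simpa [Pi.basisFun_apply, e] using he k
  have hn : ∀ n : ℕ, gaDerivedSeries a n = ⊤ := by
    intro n
    induction n with
    | zero => rfl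
    | succ n ih =>
      show Submodule.span ℝ
        {z : Fin 7 → ℝ | ∃ x ∈ gaDerivedSeries a n, ∃ y ∈ gaDerivedSeries a n, z = bra a x y} = ⊤
      rw [ih]
      have hset : {z : Fin 7 → ℝ | ∃ x ∈ (⊤ : Submodule ℝ (Fin 7 → ℝ)),
          ∃ y ∈ (⊤ : Submodule ℝ (Fin 7 → ℝ)), z = bra a x y} = S := by
        ext z; simp [hSdef]
      rw [hset, hspan]
  refine ⟨hspan, hn, ?_⟩
  rintro ⟨n, h⟩
  rw [hn n] at h
  exact top_ne_bot h
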